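/- arXiv:2105.04159 — 3 statements merged into one kernel-verified Lean document; each statement's English description precedes it below -/
import Mathlib

section
/- Suppose n ≥ 1 and d ≥ 0 are integers, P is a multilinear polynomial in n variables of total degree at most d over a field 𝔽, and A ⊆ 𝔽ⁿ is a subset with |A| > 2·∑_{i=0}^{⌊d/2⌋} C(n,i). If P(a − b) = 0 for all distinct a, b ∈ A, then P(0) = 0. -/
/-! If `P 0 ≠ 0`, the matrix `(P (a - b))_{a, b ∈ A}` is diagonal with nonzero diagonal, so its rank
is `|A|`. Expanding each multilinear monomial as
`∏_{i ∈ m} (a i - b i) = ∑_{S ⊆ m} (∏_{i ∈ S} a i) * ∏_{i ∈ m \ S} (-b i)` writes the matrix as a sum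
of rank-one terms, and since `|m| ≤ d ≤ 2 ⌊d/2⌋ + 1`, each term has `|S| ≤ ⌊d/2⌋` or `|m \ S| ≤ ⌊d/2⌋`.
The terms of the first kind have their columns among the `a ↦ ∏_{i ∈ T} a i`, those of the second
kind their rows among the `b ↦ ∏_{i ∈ T} (-b i)`, with `|T| ≤ ⌊d/2⌋`; this bounds the rank by
`2 ∑_{i ≤ ⌊d/2⌋} (n choose i)`. -/

open Finset MvPolynomial

namespace Matrix

variable {m n K : Type*} [Fintype n] [Field K]

theorem rank_add_le (A B : Matrix m n K) : (A + B).rank ≤ A.rank + B.rank := by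
  unfold rank
  rw [mulVecLin_add]
  exact (Submodule.finrank_mono (LinearMap.range_add_le _ _)).trans
    (Submodule.finrank_add_le_finrank_add_finrank _ _)

theorem rank_sum_smul_vecMulVec_le_card_of_mem_left {ι : Type*} [DecidableEq (m → K)]
    (s : Finset ι) (c : ι → K) (u : ι → m → K) (v : ι → n → K) (W : Finset (m → K))
    (hu : ∀ i ∈ s, u i ∈ W) : (∑ i ∈ s, c i • vecMulVec (u i) (v i)).rank ≤ #W := by
  refine le_trans (Submodule.finrank_mono ?_) (finrank_span_finset_le_card W)
  rintro _ ⟨x, rfl⟩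
  simp only [mulVecLin_apply, sum_mulVec, smul_mulVec, vecMulVec_mulVec, op_smul_eq_smul]
  exact Submodule.sum_mem _ fun i hi =>
    Submodule.smul_mem _ _ (Submodule.smul_mem _ _ (Submodule.subset_span (hu i hi)))

theorem rank_sum_smul_vecMulVec_le_card_of_mem_right {ι : Type*} [Fintype m] [DecidableEq (n → K)]
    (s : Finset ι) (c : ι → K) (u : ι → m → K) (v : ι → n → K) (W : Finset (n → K))
    (hv : ∀ i ∈ s, v i ∈ W) : (∑ i ∈ s, c i • vecMulVec (u i) (v i)).rank ≤ #W := by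
  rw [← rank_transpose]
  simp only [transpose_sum, transpose_smul, transpose_vecMulVec]
  exact rank_sum_smul_vecMulVec_le_card_of_mem_left s c v u W hv

theorem rank_sum_smul_vecMulVec_le_card_add_card {ι : Type*} [Fintype m] [DecidableEq (m → K)]
    [DecidableEq (n → K)] (s : Finset ι) (c : ι → K) (u : ι → m → K) (v : ι → n → K)
    (W₁ : Finset (m → K)) (W₂ : Finset (n → K)) (h : ∀ i ∈ s, u i ∈ W₁ ∨ v i ∈ W₂) :
    (∑ i ∈ s, c i • vecMulVec (u i) (v i)).rank ≤ #W₁ + #W₂ := by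
  rw [← sum_filter_add_sum_filter_not s (fun i => u i ∈ W₁)]
  refine (rank_add_le _ _).trans (add_le_add ?_ ?_)
  · exact rank_sum_smul_vecMulVec_le_card_of_mem_left _ c u v W₁ fun i hi => (mem_filter.1 hi).2
  · refine rank_sum_smul_vecMulVec_le_card_of_mem_right _ c u v W₂ fun i hi => ?_
    obtain ⟨hi, hu⟩ := mem_filter.1 hi
    exact (h i hi).resolve_left hu

end Matrix

theorem Finset.card_filter_card_le_eq_sum_choose {α : Type*} [Fintype α] (k : ℕ) :
    #{T : Finset α | #T ≤ k} = ∑ i ∈ range (k + 1), (Fintype.card α).choose i := by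
  rw [card_eq_sum_card_fiberwise (f := card) (t := range (k + 1))
    fun T hT => mem_range_succ_iff.2 (mem_filter.1 hT).2]
  refine sum_congr rfl fun i hi => ?_
  rw [← card_univ, ← card_powersetCard, powersetCard_eq_filter, filter_filter]
  congr 1
  ext T
  simp only [mem_filter, mem_powerset]
  grind [mem_range_succ_iff]

namespace MvPolynomial

variable {σ R : Type*}

theorem card_support_le_totalDegree [CommSemiring R] {P : MvPolynomial σ R} {m : σ →₀ ℕ}
    (hm : m ∈ P.support) : #m.support ≤ P.totalDegree := by
  refine le_trans ?_ (le_totalDegree hm)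
  rw [card_eq_sum_ones, Finsupp.sum]
  exact sum_le_sum fun i hi => Nat.one_le_iff_ne_zero.2 (Finsupp.mem_support_iff.1 hi)

theorem eval_eq_sum_prod_support_of_multilinear [CommSemiring R] {P : MvPolynomial σ R}
    (hml : ∀ m ∈ P.support, ∀ i, m i ≤ 1) (x : σ → R) :
    eval x P = ∑ m ∈ P.support, coeff m P * ∏ i ∈ m.support, x i := by
  rw [eval_eq]
  refine sum_congr rfl fun m hm => congrArg _ (prod_congr rfl fun i hi => ?_)
  rw [le_antisymm (hml m hm i) (Nat.one_le_iff_ne_zero.2 (Finsupp.mem_support_iff.1 hi)), pow_one]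

theorem of_eval_sub_eq_sum_smul_vecMulVec [CommRing R] [DecidableEq σ] {P : MvPolynomial σ R}
    (hml : ∀ m ∈ P.support, ∀ i, m i ≤ 1) {ι : Type*} (x : ι → σ → R) :
    Matrix.of (fun a b => eval (x a - x b) P) =
      ∑ p ∈ P.support.sigma fun m => m.support.powerset, coeff p.1 P •
        Matrix.vecMulVec (fun a => ∏ i ∈ p.2, x a i) fun b => ∏ i ∈ p.1.support \ p.2, -x b i := by
  ext a b
  simp only [Matrix.of_apply, Matrix.sum_apply, Matrix.smul_apply, Matrix.vecMulVec_apply,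
    smul_eq_mul, sum_sigma, eval_eq_sum_prod_support_of_multilinear hml]
  refine sum_congr rfl fun m _ => ?_
  simp only [Pi.sub_apply, sub_eq_add_neg, prod_add, mul_sum]

theorem rank_of_eval_sub_le {K : Type*} [Field K] [Fintype σ] [DecidableEq σ]
    {P : MvPolynomial σ K} (hml : ∀ m ∈ P.support, ∀ i, m i ≤ 1) {k : ℕ}
    (hdeg : P.totalDegree ≤ 2 * k + 1) {ι : Type*} [Fintype ι] (x : ι → σ → K) :
    (Matrix.of fun a b => eval (x a - x b) P).rank ≤ 2 * #{T : Finset σ | #T ≤ k} := by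
  classical
  let low : Finset (Finset σ) := {T | #T ≤ k}
  rw [of_eval_sub_eq_sum_smul_vecMulVec hml, two_mul]
  refine (Matrix.rank_sum_smul_vecMulVec_le_card_add_card _ _ _ _
    (low.image fun T a => ∏ i ∈ T, x a i) (low.image fun T b => ∏ i ∈ T, -x b i) ?_).trans
    (add_le_add card_image_le card_image_le)
  rintro ⟨m, S⟩ hp
  obtain ⟨hm, hS⟩ := mem_sigma.1 hp
  have hsplit : #(m.support \ S) + #S = #m.support :=
    card_sdiff_add_card_eq_card (mem_powerset.1 hS)
  have hm_card : #m.support ≤ P.totalDegree := card_support_le_totalDegree hm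
  by_cases hSk : #S ≤ k
  · exact .inl (mem_image.2 ⟨S, by simpa [low] using hSk, rfl⟩)
  · exact .inr (mem_image.2 ⟨_, by simp only [low, mem_filter, mem_univ, true_and]; omega, rfl⟩)

end MvPolynomial

theorem croot_lev_pach_general {n d : ℕ} (𝔽 : Type*) [Field 𝔽]
    (P : MvPolynomial (Fin n) 𝔽)
    (hml : ∀ m ∈ P.support, ∀ i, m i ≤ 1)
    (hdeg : P.totalDegree ≤ d)
    (A : Finset (Fin n → 𝔽))
    (hA : 2 * ∑ i ∈ Finset.range (d / 2 + 1), n.choose i < A.card)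
    (hzero : ∀ a ∈ A, ∀ b ∈ A, a ≠ b → eval (a - b) P = 0) :
    eval 0 P = 0 := by
  classical
  by_contra h0
  have hdiag : (Matrix.of fun a b : A => eval (a.1 - b.1) P) = .diagonal fun _ => eval 0 P := by
    ext a b
    by_cases hab : a = b
    · simp [hab]
    · simp [Matrix.diagonal_apply_ne _ hab, hzero a a.2 b b.2 (Subtype.coe_ne_coe.2 hab)]
  have hrank := rank_of_eval_sub_le hml (k := d / 2) (by omega) ((↑) : A → Fin n → 𝔽)
  rw [hdiag, Matrix.rank_diagonal, card_filter_card_le_eq_sum_choose, Fintype.card_fin] at hrank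
  simp only [ne_eq, h0, not_false_eq_true, Fintype.card_subtype_true, Fintype.card_coe] at hrank
  omega

theorem croot_lev_pach {n d : ℕ} (hn : 1 ≤ n) (𝔽 : Type*) [Field 𝔽]
    (P : MvPolynomial (Fin n) 𝔽)
    (hml : ∀ m ∈ P.support, ∀ i, m i ≤ 1)
    (hdeg : P.totalDegree ≤ d)
    (A : Finset (Fin n → 𝔽))
    (hA : 2 * ∑ i ∈ Finset.range (d / 2 + 1), n.choose i < A.card)
    (hzero : ∀ a ∈ A, ∀ b ∈ A, a ≠ b → eval (a - b) P = 0) :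
    eval 0 P = 0 :=
  croot_lev_pach_general 𝔽 P hml hdeg A hA hzero
end

section
/- Let F be a family of subsets of [n] with VC-dimension at most d. Then |F| ≤ ∑_{k=0}^{d} C(n,k). -/
open Finset

def ShattersFam {n : ℕ} (F : Finset (Finset (Fin n))) (M : Finset (Fin n)) : Prop :=
  ∀ S ⊆ M, ∃ A ∈ F, A ∩ M = S

/-! Every family is at most as large as the family of sets it shatters (Pajor), and a shattered
set has size at most the VC-dimension, so there are at most `∑_{k ≤ d} C(n, k)` of them. -/

theorem shattersFam_iff_shatters {n : ℕ} {F : Finset (Finset (Fin n))} {M : Finset (Fin n)} :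
    ShattersFam F M ↔ F.Shatters M := by
  simp only [ShattersFam, Finset.Shatters, inter_comm M]

theorem vcDim_le_of_shattersFam {n d : ℕ} {F : Finset (Finset (Fin n))}
    (hVC : ∀ M : Finset (Fin n), ShattersFam F M → M.card ≤ d) : F.vcDim ≤ d :=
  Finset.sup_le fun M hM ↦ hVC M (shattersFam_iff_shatters.2 (mem_shatterer.1 hM))

theorem Finset.card_le_sum_choose_of_vcDim_le {α : Type*} [Fintype α] [DecidableEq α]
    {𝒜 : Finset (Finset α)} {d : ℕ} (hd : 𝒜.vcDim ≤ d) :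
    #𝒜 ≤ ∑ k ∈ range (d + 1), (Fintype.card α).choose k :=
  calc #𝒜 ≤ #𝒜.shatterer := card_le_card_shatterer 𝒜
    _ ≤ ∑ k ∈ Iic 𝒜.vcDim, (Fintype.card α).choose k := card_shatterer_le_sum_vcDim
    _ ≤ ∑ k ∈ range (d + 1), (Fintype.card α).choose k := by
      rw [Nat.range_succ_eq_Iic]
      exact sum_le_sum_of_subset (Iic_subset_Iic.2 hd)

theorem sauer_shelah {n d : ℕ} (F : Finset (Finset (Fin n)))
    (hVC : ∀ M : Finset (Fin n), ShattersFam F M → M.card ≤ d) :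
    F.card ≤ ∑ k ∈ Finset.range (d + 1), n.choose k := by
  simpa only [Fintype.card_fin] using card_le_sum_choose_of_vcDim_le (vcDim_le_of_shattersFam hVC)
end

section
/- Let n ≥ 1 and let F be a family of subsets of [n] all of size k such that |A Δ B| ≤ d for all A, B ∈ F, where d ≤ n. Then |F| ≤ 2 · C(n, ⌊d/2⌋). -/
/-!
Since all members of `F` have size `k`, `|A ∆ B| = 2 |B \ A|`, so `|B \ A| ≤ t := ⌊d/2⌋` for all
`A, B ∈ F`. Viewing functions on `F` as polynomials in the characteristic vector, the polynomial
`∑ (-1)^|I| x_I` over `I ⊆ Aᶜ` with `|I| ≤ t` is the indicator of `A` on `F`: at `B` it is an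
alternating sum over the subsets of `B \ A`. Hence the monomials of degree at most `t` span all
functions on `F`. On the slice `|S| = k` we have `(k - |I|) x_I = ∑_{j ∉ I} x_{I ∪ {j}}`, so if
`t ≤ k` the `C(n, t)` monomials of degree exactly `t` suffice, and `|F| ≤ C(n, t)`. If `t > k`,
then `|F| ≤ C(n, k) ≤ C(n, t)` because `t ≤ n / 2`.
-/

open Finset
open scoped symmDiff

theorem Nat.choose_le_choose_of_le_half_left {n a b : ℕ} (hab : a ≤ b) (hb : b ≤ n / 2) :
    n.choose a ≤ n.choose b := by
  induction b, hab using Nat.le_induction with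
  | base => rfl
  | succ b _ ih => exact (ih (by omega)).trans (Nat.choose_le_succ_of_lt_half_left (by omega))

theorem Finset.card_symmDiff_of_card_eq {α : Type*} [DecidableEq α] {A B : Finset α}
    (h : A.card = B.card) : (A ∆ B).card = 2 * (B \ A).card := by
  rw [symmDiff_def, sup_eq_union, card_union_of_disjoint disjoint_sdiff_sdiff, card_sdiff_comm h]
  ring

namespace UniformKleitman

variable {α : Type*} [Fintype α] [DecidableEq α] {F : Finset (Finset α)} {k t : ℕ}

/-- The monomial `x_I = ∏ i ∈ I, x i` evaluated at the characteristic vectors of the members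
of `F`. -/
def monomial (F : Finset (Finset α)) (I : Finset α) : F → ℚ := fun S => if I ⊆ S.1 then 1 else 0

noncomputable def homogeneousSpan (F : Finset (Finset α)) (t : ℕ) : Submodule ℚ (F → ℚ) :=
  Submodule.span ℚ ((powersetCard t univ).image (monomial F))

theorem finrank_homogeneousSpan_le (F : Finset (Finset α)) (t : ℕ) :
    Module.finrank ℚ (homogeneousSpan F t) ≤ (Fintype.card α).choose t :=
  calc Module.finrank ℚ (homogeneousSpan F t) ≤ ((powersetCard t univ).image (monomial F)).card :=
        finrank_span_finset_le_card _
    _ ≤ (powersetCard t (univ : Finset α)).card := card_image_le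
    _ = (Fintype.card α).choose t := by rw [card_powersetCard, card_univ]

theorem sum_monomial_insert (hF : (F : Set (Finset α)).Sized k) (I : Finset α) :
    ∑ j ∈ Iᶜ, monomial F (insert j I) = ((k : ℚ) - I.card) • monomial F I := by
  ext ⟨S, hS⟩
  simp only [Finset.sum_apply, Pi.smul_apply, smul_eq_mul, monomial, insert_subset_iff]
  by_cases hIS : I ⊆ S
  · have hcard : (Iᶜ.filter (· ∈ S)).card = k - I.card := by
      rw [← hF hS, ← card_sdiff_of_subset hIS]
      congr 1; ext; simp [and_comm]
    simp only [hIS, and_true, if_true, mul_one]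
    rw [← sum_filter, sum_const, hcard, nsmul_eq_mul, mul_one,
      Nat.cast_sub (hF hS ▸ card_le_card hIS)]
  · simp [hIS]

theorem monomial_mem_homogeneousSpan (hF : (F : Set (Finset α)).Sized k) (htk : t ≤ k)
    {I : Finset α} (hI : I.card ≤ t) : monomial F I ∈ homogeneousSpan F t := by
  obtain ⟨m, hm⟩ := Nat.exists_eq_add_of_le hI
  induction m generalizing I with
  | zero => exact Submodule.subset_span (mem_image_of_mem _ (mem_powersetCard_univ.2 hm.symm))
  | succ m ih =>
    have hk : (k : ℚ) - I.card ≠ 0 := sub_ne_zero.2 (by norm_cast; omega)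
    rw [← inv_smul_smul₀ hk (monomial F I), ← sum_monomial_insert hF]
    refine Submodule.smul_mem _ _ (Submodule.sum_mem _ fun j hj => ih ?_ ?_)
    all_goals rw [card_insert_of_notMem (mem_compl.1 hj)]; omega

theorem single_eq_sum_monomial (hF : (F : Set (Finset α)).Sized k)
    (hsd : ∀ A ∈ F, ∀ B ∈ F, (B \ A).card ≤ t) (A : F) :
    Pi.single A 1 =
      ∑ I ∈ (A.1ᶜ).powerset.filter (·.card ≤ t), ((-1 : ℚ) ^ I.card) • monomial F I := by
  ext B
  have hsupp :
      ((A.1ᶜ).powerset.filter (·.card ≤ t)).filter (· ⊆ B.1) = (B.1 \ A.1).powerset := by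
    ext I
    simp only [mem_filter, mem_powerset, subset_sdiff, subset_compl_iff_disjoint_left]
    exact ⟨fun ⟨⟨hA, _⟩, hB⟩ => ⟨hB, hA.symm⟩,
      fun ⟨hB, hA⟩ => ⟨⟨hA.symm, (card_le_card (subset_sdiff.2 ⟨hB, hA⟩)).trans
        (hsd A A.2 B B.2)⟩, hB⟩⟩
  have hAB : B.1 \ A.1 = ∅ ↔ B = A := by
    rw [sdiff_eq_empty_iff_subset, Subtype.ext_iff]
    exact ⟨fun h => eq_of_subset_of_card_le h ((hF A.2).trans (hF B.2).symm).le,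
      fun h => h.subset⟩
  have := sum_powerset_neg_one_pow_card (x := B.1 \ A.1)
  simp only [Finset.sum_apply, Pi.smul_apply, smul_eq_mul, monomial, mul_ite, mul_one, mul_zero,
    ← sum_filter, hsupp, Pi.single_apply, ← hAB]
  exact_mod_cast this.symm

theorem homogeneousSpan_eq_top (hF : (F : Set (Finset α)).Sized k) (htk : t ≤ k)
    (hsd : ∀ A ∈ F, ∀ B ∈ F, (B \ A).card ≤ t) : homogeneousSpan F t = ⊤ := by
  rw [eq_top_iff, ← (Pi.basisFun ℚ F).span_eq, Submodule.span_le, Set.range_subset_iff]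
  intro A
  rw [Pi.basisFun_apply, single_eq_sum_monomial hF hsd]
  exact Submodule.sum_mem _ fun I hI =>
    Submodule.smul_mem _ _ (monomial_mem_homogeneousSpan hF htk (mem_filter.1 hI).2)

theorem card_le_choose_of_card_sdiff_le (hF : (F : Set (Finset α)).Sized k) (htk : t ≤ k)
    (hsd : ∀ A ∈ F, ∀ B ∈ F, (B \ A).card ≤ t) : F.card ≤ (Fintype.card α).choose t :=
  calc F.card = Module.finrank ℚ (⊤ : Submodule ℚ (F → ℚ)) := by simp
    _ = Module.finrank ℚ (homogeneousSpan F t) := by rw [homogeneousSpan_eq_top hF htk hsd]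
    _ ≤ (Fintype.card α).choose t := finrank_homogeneousSpan_le F t

end UniformKleitman

theorem uniform_kleitman_general {n d k : ℕ} (hdn : d ≤ n)
    (F : Finset (Finset (Fin n))) (hunif : ∀ A ∈ F, A.card = k)
    (hdiam : ∀ A ∈ F, ∀ B ∈ F, (A ∆ B).card ≤ d) :
    F.card ≤ 2 * n.choose (d / 2) := by
  have hsd : ∀ A ∈ F, ∀ B ∈ F, (B \ A).card ≤ d / 2 := fun A hA B hB => by
    have := hdiam A hA B hB
    rw [card_symmDiff_of_card_eq ((hunif A hA).trans (hunif B hB).symm)] at this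
    omega
  have hchoose : F.card ≤ n.choose (d / 2) := by
    rcases le_total (d / 2) k with htk | hkt
    · simpa using UniformKleitman.card_le_choose_of_card_sdiff_le hunif htk hsd
    · calc F.card ≤ n.choose k := by simpa using Set.Sized.card_le hunif
        _ ≤ n.choose (d / 2) := Nat.choose_le_choose_of_le_half_left hkt (by omega)
  omega

theorem uniform_kleitman {n d k : ℕ} (hn : 1 ≤ n) (hdn : d ≤ n)
    (F : Finset (Finset (Fin n))) (hunif : ∀ A ∈ F, A.card = k)
    (hdiam : ∀ A ∈ F, ∀ B ∈ F, (A ∆ B).card ≤ d) :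
    F.card ≤ 2 * n.choose (d / 2) :=
  uniform_kleitman_general hdn F hunif hdiam
end
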